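/- arXiv:2402.18940 — 3 statements merged into one kernel-verified Lean document; each statement's English description precedes it below -/
import Mathlib

section
/- For every t ∈ [0, 1), the binary-expansion map satisfies g(cos(πt)) = cos(π·frac(2t)), where frac(s) = s − ⌊s⌋ is the fractional part. -/
open Real

/-- One step of the Quantum Function-value Binary Expansion iteration:
`g(y) = 2y² − 1` if `y > 0` and `g(y) = 1 − 2y²` if `y ≤ 0`. -/
noncomputable def binExpStep (y : ℝ) : ℝ := if 0 < y then 2 * y ^ 2 - 1 else 1 - 2 * y ^ 2

lemma binExpStep_of_pos {y : ℝ} (hy : 0 < y) : binExpStep y = 2 * y ^ 2 - 1 :=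
  if_pos hy

lemma binExpStep_of_nonpos {y : ℝ} (hy : y ≤ 0) : binExpStep y = 1 - 2 * y ^ 2 :=
  if_neg hy.not_gt

lemma binExpStep_cos_of_cos_pos {θ : ℝ} (h : 0 < cos θ) : binExpStep (cos θ) = cos (2 * θ) := by
  rw [binExpStep_of_pos h, cos_two_mul]

lemma binExpStep_cos_of_cos_nonpos {θ : ℝ} (h : cos θ ≤ 0) :
    binExpStep (cos θ) = cos (2 * θ - π) := by
  rw [binExpStep_of_nonpos h, cos_sub_pi, cos_two_mul]
  ring

lemma Int.fract_eq_sub_one_of_mem_Ico {a : ℝ} (ha : a ∈ Set.Ico (1 : ℝ) 2) :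
    Int.fract a = a - 1 := by
  rw [← Int.fract_sub_one, Int.fract_eq_self]
  constructor <;> linarith [ha.1, ha.2]

/-- For every `t ∈ [0,1)`, the binary-expansion map satisfies
`g(cos(πt)) = cos(π·frac(2t))`, where `frac` is the fractional part. -/
theorem binExpStep_cos (t : ℝ) (ht : t ∈ Set.Ico (0 : ℝ) 1) :
    binExpStep (Real.cos (Real.pi * t)) = Real.cos (Real.pi * Int.fract (2 * t)) := by
  obtain ⟨h0, h1⟩ := ht
  have hπ := pi_pos
  rcases lt_or_ge t (1 / 2) with hlt | hge
  · have hcos : 0 < cos (π * t) := cos_pos_of_mem_Ioo ⟨by nlinarith, by nlinarith⟩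
    rw [binExpStep_cos_of_cos_pos hcos, Int.fract_eq_self.2 ⟨by linarith, by linarith⟩]
    ring_nf
  · have hcos : cos (π * t) ≤ 0 := cos_nonpos_of_pi_div_two_le_of_le (by nlinarith) (by nlinarith)
    rw [binExpStep_cos_of_cos_nonpos hcos,
      Int.fract_eq_sub_one_of_mem_Ico ⟨by linarith, by linarith⟩]
    ring_nf
end

section
/- Let t ∈ [0, 1) and set x₀ = cos(πt), x_{k+1} = g(x_k). Then for every k ≥ 0, x_k = cos(π·frac(2^k · t)). In particular, for x ∈ (−1, 1] and t = arccos(x)/π, the iterates starting from x₀ = x satisfy x_k = cos(π·frac(2^k · arccos(x)/π)). -/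
/-!
Writing `x = cos (π u)` with `u ∈ [0, 1)`, the step `g` is the double-angle formula up to sign:
`g (cos (π u)) = cos (2π u)` when `u < 1/2` and `-cos (2π u) = cos (π (2u - 1))` otherwise.
So on the angle `u` it acts as the doubling map `u ↦ frac (2u)`, whose iterates are
`u ↦ frac (2^k u)`.
-/

open Real

theorem Int.fract_natCast_mul_fract {R : Type*} [Ring R] [LinearOrder R] [FloorRing R]
    [IsOrderedRing R] (n : ℕ) (a : R) : Int.fract (n * Int.fract a) = Int.fract (n * a) := by
  rw [← Int.self_sub_floor a, mul_sub, ← Int.cast_natCast n, ← Int.cast_mul, Int.fract_sub_intCast]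

lemma binExpStep_cos_pi_mul {u : ℝ} (hu : u ∈ Set.Ico (0 : ℝ) 1) :
    binExpStep (cos (π * u)) = cos (π * Int.fract (2 * u)) := by
  obtain ⟨hu0, hu1⟩ := hu
  rcases lt_or_ge u (1 / 2) with hlt | hge
  · have hcos : 0 < cos (π * u) :=
      cos_pos_of_mem_Ioo ⟨by nlinarith [pi_pos], by nlinarith [pi_pos]⟩
    rw [binExpStep, if_pos hcos, Int.fract_eq_self.2 ⟨by linarith, by linarith⟩, mul_left_comm,
      cos_two_mul]
  · have hcos : cos (π * u) ≤ 0 :=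
      cos_nonpos_of_pi_div_two_le_of_le (by nlinarith [pi_pos]) (by nlinarith [pi_pos])
    rw [binExpStep, if_neg hcos.not_gt, ← Int.fract_sub_one,
      Int.fract_eq_self.2 ⟨by linarith, by linarith⟩, mul_sub, mul_one, mul_left_comm, cos_sub_pi,
      cos_two_mul]
    ring

lemma binExpStep_orbit_eq_cos_pi_mul_fract {t : ℝ} {xs : ℕ → ℝ}
    (h0 : xs 0 = cos (π * Int.fract t)) (hstep : ∀ k, xs (k + 1) = binExpStep (xs k)) (k : ℕ) :
    xs k = cos (π * Int.fract (2 ^ k * t)) := by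
  induction k with
  | zero => simpa using h0
  | succ k ih =>
    have hdouble : Int.fract (2 * Int.fract (2 ^ k * t)) = Int.fract (2 ^ (k + 1) * t) := by
      rw [pow_succ', mul_assoc]
      exact_mod_cast Int.fract_natCast_mul_fract 2 (2 ^ k * t)
    rw [hstep, ih, binExpStep_cos_pi_mul ⟨Int.fract_nonneg _, Int.fract_lt_one _⟩, hdouble]

/-- For `t ∈ [0,1)` and the iteration `x₀ = cos(πt)`, `x_{k+1} = g(x_k)`, every iterate
satisfies `x_k = cos(π·frac(2^k·t))`.  In particular, for `x ∈ (−1,1]` and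
`t = arccos(x)/π`, the iterates starting from `x₀ = x` satisfy
`x_k = cos(π·frac(2^k·arccos(x)/π))`. -/
theorem binExp_iterates_eq_cos_fract :
    (∀ t : ℝ, t ∈ Set.Ico (0 : ℝ) 1 → ∀ xs : ℕ → ℝ, xs 0 = Real.cos (Real.pi * t) →
        (∀ k, xs (k + 1) = binExpStep (xs k)) →
        ∀ k, xs k = Real.cos (Real.pi * Int.fract ((2 : ℝ) ^ k * t))) ∧
      (∀ x : ℝ, x ∈ Set.Ioc (-1 : ℝ) 1 → ∀ xs : ℕ → ℝ, xs 0 = x →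
        (∀ k, xs (k + 1) = binExpStep (xs k)) →
        ∀ k, xs k = Real.cos (Real.pi * Int.fract ((2 : ℝ) ^ k * (Real.arccos x / Real.pi)))) := by
  refine ⟨fun t ht xs h0 hstep => binExpStep_orbit_eq_cos_pi_mul_fract ?_ hstep,
    fun x hx xs h0 hstep => binExpStep_orbit_eq_cos_pi_mul_fract ?_ hstep⟩
  · rwa [Int.fract_eq_self.2 ht]
  · have ht : arccos x / π ∈ Set.Ico (0 : ℝ) 1 :=
      ⟨div_nonneg (arccos_nonneg x) pi_pos.le, (div_lt_one pi_pos).2 (arccos_lt_pi.2 hx.1)⟩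
    rw [Int.fract_eq_self.2 ht, mul_div_cancel₀ _ pi_ne_zero, cos_arccos hx.1.le hx.2, h0]
end

section
/- Let t ∈ [0, 1) and set x₀ = cos(πt), x_{k+1} = g(x_k). Then for every k ≥ 0, x_k ≤ 0 if and only if ⌊2^{k+1}·t⌋ is odd; i.e., the sign of the k-th iterate equals the (k+1)-th binary digit of t. Hence the sign pattern of the iterates computes the binary expansion of arccos(x)/π when x₀ = x = cos(πt). -/
/-!
Writing `x₀ = cos (π t)` with `t = fract t`, the step `binExpStep` is the angle doubling
`cos (π v) ↦ cos (π · fract (2 v))`: for `v < 1/2` it is `cos (2πv) = 2 cos² (πv) - 1`, and for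
`v ≥ 1/2` it is `cos (2πv - π) = 1 - 2 cos² (πv)`. Hence `x_k = cos (π · fract (2^k t))`, which is
`≤ 0` exactly when `fract (2^k t) ≥ 1/2`, i.e. when the binary digit `⌊2^{k+1} t⌋ mod 2` is `1`.
-/

open Real

namespace Int

section FloorRing

variable {α : Type*} [Field α] [LinearOrder α] [IsStrictOrderedRing α] [FloorRing α]

theorem floor_two_mul (u : α) : ⌊2 * u⌋ = 2 * ⌊u⌋ + ⌊2 * fract u⌋ := by
  rw [← floor_intCast_add]
  push_cast
  rw [fract]
  ring_nf

theorem fract_two_mul (u : α) : fract (2 * u) = 2 * fract u - ⌊2 * fract u⌋ := by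
  rw [fract, floor_two_mul, fract]
  push_cast
  ring

theorem floor_two_mul_fract (u : α) : ⌊2 * fract u⌋ = if fract u < 1 / 2 then 0 else 1 := by
  have h0 := fract_nonneg u
  have h1 := fract_lt_one u
  split_ifs with h
  · exact floor_eq_zero_iff.2 ⟨by positivity, by linarith⟩
  · exact floor_eq_iff.2 ⟨by push_cast; linarith, by push_cast; linarith⟩

theorem odd_floor_two_mul_iff (u : α) : Odd ⌊2 * u⌋ ↔ 1 / 2 ≤ fract u := by
  rw [floor_two_mul, floor_two_mul_fract]
  split_ifs with h
  · exact iff_of_false (by rw [add_zero, not_odd_iff_even]; exact even_two_mul ⌊u⌋) h.not_ge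
  · exact iff_of_true (even_two_mul ⌊u⌋).add_one (not_lt.1 h)

end FloorRing

end Int

open Int

theorem cos_pi_mul_fract_pos_iff (u : ℝ) : 0 < cos (π * fract u) ↔ fract u < 1 / 2 := by
  have h0 := fract_nonneg u
  have h1 := fract_lt_one u
  constructor
  · intro hpos
    by_contra! h
    exact hpos.not_ge <| cos_nonpos_of_pi_div_two_le_of_le (by nlinarith [pi_pos])
      (by nlinarith [pi_pos])
  · intro h
    exact cos_pos_of_mem_Ioo ⟨by nlinarith [pi_pos], by nlinarith [pi_pos]⟩

theorem binExpStep_cos_pi_mul_fract (u : ℝ) :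
    binExpStep (cos (π * fract u)) = cos (π * fract (2 * u)) := by
  simp only [binExpStep, cos_pi_mul_fract_pos_iff, fract_two_mul, floor_two_mul_fract]
  split_ifs
  · rw [cast_zero, sub_zero, mul_left_comm, cos_two_mul]
  · rw [cast_one, mul_sub, mul_one, mul_left_comm, cos_sub_pi, cos_two_mul]
    ring

theorem eq_cos_pi_mul_fract_of_binExpStep {xs : ℕ → ℝ} {t : ℝ}
    (h0 : xs 0 = cos (π * fract t)) (hrec : ∀ k, xs (k + 1) = binExpStep (xs k)) (k : ℕ) :
    xs k = cos (π * fract (2 ^ k * t)) := by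
  induction k with
  | zero => rwa [pow_zero, one_mul]
  | succ k ih => rw [hrec, ih, binExpStep_cos_pi_mul_fract, pow_succ', mul_assoc]

/-- For `t ∈ [0,1)` and the iteration `x₀ = cos(πt)`, `x_{k+1} = g(x_k)`, the `k`-th
iterate satisfies `x_k ≤ 0` iff `⌊2^{k+1}·t⌋` is odd; i.e. the sign of the `k`-th iterate
equals the `(k+1)`-th binary digit of `t`, so the sign pattern of the iterates computes
the binary expansion of `arccos(x)/π` when `x₀ = x = cos(πt)`. -/
theorem binExp_sign_eq_binary_digit (t : ℝ) (ht : t ∈ Set.Ico (0 : ℝ) 1)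
    (xs : ℕ → ℝ) (h0 : xs 0 = Real.cos (Real.pi * t))
    (hrec : ∀ k, xs (k + 1) = binExpStep (xs k)) :
    ∀ k, xs k ≤ 0 ↔ Odd ⌊(2 : ℝ) ^ (k + 1) * t⌋ := by
  intro k
  have hxs : xs 0 = cos (π * fract t) := by rwa [fract_eq_self.2 ht]
  rw [eq_cos_pi_mul_fract_of_binExpStep hxs hrec k, pow_succ', mul_assoc, odd_floor_two_mul_iff,
    ← not_lt, cos_pi_mul_fract_pos_iff, not_lt]
end
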